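/- Let M ⊆ N with inclusion α, where both M and N are Hilbert C*-modules with a Hilbert dual, and define P : N' → M' by P(g)(m) = g(α(m)) and I = P* : M' → N'. Then I(m̂) = α(m)^ for all m ∈ M, and if M is thick in N, then P ∘ I = id_{M'} and I is an isometric inclusion. -/

import Mathlib

open scoped RightActions

/-- The Hilbert C⋆-module class as it stood in the older Mathlib (right action of `A`
through `Aᵐᵒᵖ`, inner product `A`-linear on the right); Mathlib's `CStarModule` now uses a
left action with another axiom. -/
class RightCStarModule (A : outParam <| Type*) (E : Type*) [NonUnitalSemiring A] [StarRing A]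
    [Module ℂ A] [AddCommGroup E] [Module ℂ E] [PartialOrder A] [SMul Aᵐᵒᵖ E] [Norm A] [Norm E]
    extends Inner A E where
  inner_add_right {x} {y} {z} : inner x (y + z) = inner x y + inner x z
  inner_self_nonneg {x} : 0 ≤ inner x x
  inner_self {x} : inner x x = 0 ↔ x = 0
  inner_op_smul_right {a : A} {x y : E} : inner x (y <• a) = inner x y * a
  inner_smul_right_complex {z : ℂ} {x} {y} : inner x (z • y) = z • inner x y
  star_inner x y : star (inner x y) = inner y x
  norm_eq_sqrt_norm_inner_self x : ‖x‖ = √‖inner x x‖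

section Defs

variable {A : Type*} [CStarAlgebra A] [PartialOrder A] [StarOrderedRing A]
variable {E : Type*} [NormedAddCommGroup E] [NormedSpace ℂ E] [SMul Aᵐᵒᵖ E] [RightCStarModule A E]

/-- Membership in the dual module `M'`: a bounded `A`-antilinear functional on `E`
(the functional `f` plays the role of `m ↦ ⟨m, f⟩`). -/
def IsDualFunctional (f : E → A) : Prop :=
  (∀ x y, f (x + y) = f x + f y) ∧
  (∀ (c : ℂ) (x : E), f (c • x) = (starRingEnd ℂ) c • f x) ∧
  (∀ (x : E) (a : A), f (x <• a) = star a * f x) ∧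
  ∃ C : ℝ, ∀ x, ‖f x‖ ≤ C * ‖x‖

/-- The canonical image `m̂` of `m ∈ M` in the dual module: `m̂ x = ⟨x, m⟩`. -/
def mhat (m : E) : E → A := fun x => inner A x m

/-- The right action of `A` on dual functionals: `f·a`. -/
def dualAct (f : E → A) (a : A) : E → A := fun x => f x * a

/-- The right ideal `J_f = {a ∈ A : f·a ∈ M}`. -/
def Jf (f : E → A) : Set A := {a : A | ∃ m : E, dualAct f a = mhat m}

/-- The right ideal `J_f` is essential in `A`. -/
def JfEssential (f : E → A) : Prop := ∀ a : A, (∀ j ∈ Jf f, a * j = 0) → a = 0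

/-- The norm of a functional in the dual module (operator norm). -/
noncomputable def dualNorm (f : E → A) : ℝ :=
  sInf {C : ℝ | 0 ≤ C ∧ ∀ x, ‖f x‖ ≤ C * ‖x‖}

end Defs

section DualInner

variable {A : Type*} [CStarAlgebra A] [PartialOrder A] [StarOrderedRing A]
variable {E : Type*} [NormedAddCommGroup E] [NormedSpace ℂ E] [SMul Aᵐᵒᵖ E] [RightCStarModule A E]

/-- `inn` is an extension of the inner product of `M` to the dual module `M'`,
making `M'` a (complete) Hilbert C*-module; this is the meaning of
"`M` is a Hilbert C*-module with a Hilbert dual".  -/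
structure IsDualInner (inn : (E → A) → (E → A) → A) : Prop where
  extends_inner : ∀ m n : E, inn (mhat m) (mhat n) = inner A m n
  eval : ∀ f : E → A, IsDualFunctional f → ∀ m : E, f m = inn (mhat m) f
  add_right : ∀ f g h : E → A, inn f (g + h) = inn f g + inn f h
  act_right : ∀ (f g : E → A) (a : A), inn f (dualAct g a) = inn f g * a
  star_inn : ∀ f g : E → A, star (inn f g) = inn g f
  nonneg : ∀ f : E → A, IsDualFunctional f → 0 ≤ inn f f
  definite : ∀ f : E → A, IsDualFunctional f → inn f f = 0 → f = 0
  complete : ∀ u : ℕ → E → A, (∀ n, IsDualFunctional (u n)) →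
    (∀ ε : ℝ, 0 < ε → ∃ N, ∀ p q, N ≤ p → N ≤ q → ‖inn (u p - u q) (u p - u q)‖ < ε) →
    ∃ g : E → A, IsDualFunctional g ∧
      Filter.Tendsto (fun n => ‖inn (u n - g) (u n - g)‖) Filter.atTop (nhds 0)

end DualInner

section Incl

variable {A : Type*} [CStarAlgebra A] [PartialOrder A] [StarOrderedRing A]
variable {E : Type*} [NormedAddCommGroup E] [NormedSpace ℂ E] [SMul Aᵐᵒᵖ E] [RightCStarModule A E]
variable {F : Type*} [NormedAddCommGroup F] [NormedSpace ℂ F] [SMul Aᵐᵒᵖ F] [RightCStarModule A F]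

/-- `α : M → N` realizes `M` as a Hilbert C*-submodule of `N` (the inner product of `M`
being the restriction of that of `N`). -/
structure IsModuleInclusion (α : E → F) : Prop where
  map_add : ∀ x y, α (x + y) = α x + α y
  map_smulC : ∀ (c : ℂ) (x : E), α (c • x) = c • α x
  map_smulA : ∀ (x : E) (a : A), α (x <• a) = α x <• a
  map_inner : ∀ x y : E, (inner A (α x) (α y) : A) = inner A x y
  injective : Function.Injective α

/-- `M` is a thick submodule of `N`, i.e. `M^⊥ = 0` in `N`. -/
def IsThick (α : E → F) : Prop := ∀ z : F, (∀ m : E, (inner A (α m) z : A) = 0) → z = 0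

/-- The functional `n̂|_M ∈ M'` induced by `n ∈ N`. -/
def restrictFun (α : E → F) (n : F) : E → A := fun m => inner A (α m) n

end Incl


/-!
Through the Hilbert-dual inner product of `N'`, the value of `I f` at `n ∈ N` is
`star ⟨I f, n̂⟩ = star ⟨f, P n̂⟩ = star ⟨f, n̂|_M⟩`. Taking `n = α m`, where `(α m)^|_M = m̂`, gives
`P (I f) = f`; taking `f = m̂` gives `I m̂ = (α m)^`. Then `⟨I f, I f⟩ = ⟨f, P (I f)⟩ = ⟨f, f⟩`.
The only analytic input is the Cauchy–Schwarz inequality, which makes `n̂|_M` a bounded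
functional, i.e. an element of `M'`.
-/

namespace RightCStarModule

variable {A : Type*} [CStarAlgebra A] [PartialOrder A]
variable {E : Type*} [NormedAddCommGroup E] [NormedSpace ℂ E] [SMul Aᵐᵒᵖ E] [RightCStarModule A E]

lemma inner_add_left {x y z : E} : inner A (x + y) z = inner A x z + inner A y z := by
  rw [← star_inner z, inner_add_right, star_add, star_inner, star_inner]

lemma inner_op_smul_left {a : A} {x y : E} : inner A (x <• a) y = star a * inner A x y := by
  rw [← star_inner y, inner_op_smul_right, star_mul, star_inner]

lemma inner_smul_left_complex {c : ℂ} {x y : E} :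
    inner A (c • x) y = (starRingEnd ℂ) c • inner A x y := by
  rw [← star_inner y, inner_smul_right_complex, star_smul, star_inner]
  rfl

lemma inner_sub_right {x y z : E} : inner A x (y - z) = inner A x y - inner A x z := by
  rw [eq_sub_iff_add_eq, ← inner_add_right, sub_add_cancel]

lemma inner_sub_left {x y z : E} : inner A (x - y) z = inner A x z - inner A y z := by
  rw [eq_sub_iff_add_eq, ← inner_add_left, sub_add_cancel]

lemma inner_smul_right_real {r : ℝ} {x y : E} : inner A x (r • y) = r • inner A x y := by
  rw [← Complex.coe_smul, inner_smul_right_complex, Complex.coe_smul]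

lemma inner_smul_left_real {r : ℝ} {x y : E} : inner A (r • x) y = r • inner A x y := by
  rw [← Complex.coe_smul, inner_smul_left_complex, Complex.conj_ofReal, Complex.coe_smul]

lemma inner_zero_right {x : E} : inner A x (0 : E) = 0 := by
  simpa using inner_smul_right_complex (A := A) (z := 0) (x := x) (y := (0 : E))

lemma inner_zero_left {y : E} : inner A (0 : E) y = 0 := by
  rw [← star_inner, inner_zero_right, star_zero]

lemma sq_norm_eq_norm_inner_self (x : E) : ‖x‖ ^ 2 = ‖(inner A x x : A)‖ := by
  rw [norm_eq_sqrt_norm_inner_self x, Real.sq_sqrt (norm_nonneg _)]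

lemma inner_mul_inner_swap_le [StarOrderedRing A] (x y : E) :
    inner A y x * inner A x y ≤ ‖x‖ ^ 2 • inner A y y := by
  rcases eq_or_ne x 0 with rfl | hx
  · simp [inner_zero_right, inner_zero_left]
  have hr : 0 < ‖x‖ ^ 2 := pow_pos (norm_pos_iff.mpr hx) 2
  rw [← star_inner x y]
  generalize ha : inner A x y = a
  -- `0 ≤ ⟨x·a - ‖x‖² y, x·a - ‖x‖² y⟩`, expanded
  have hpos : (0 : A) ≤ star a * (inner A x x * a) - ‖x‖ ^ 2 • (star a * a)
      - (‖x‖ ^ 2 • (star a * a) - ‖x‖ ^ 2 • ‖x‖ ^ 2 • inner A y y) := by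
    have h := inner_self_nonneg (A := A) (x := x <• a - ‖x‖ ^ 2 • y)
    simp only [inner_sub_right, inner_sub_left, inner_op_smul_right, inner_op_smul_left,
      inner_smul_left_real, inner_smul_right_real, smul_sub, mul_assoc,
      smul_mul_assoc, sub_mul] at h
    rwa [← star_inner x y, ha] at h
  have hconj : star a * (inner A x x * a) ≤ ‖x‖ ^ 2 • (star a * a) := by
    rw [sq_norm_eq_norm_inner_self, ← mul_assoc]
    exact CStarAlgebra.star_left_conjugate_le_norm_smul (hb := star_inner x x)
  have h : ‖x‖ ^ 2 • (star a * a) ≤ ‖x‖ ^ 2 • ‖x‖ ^ 2 • inner A y y := by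
    have := hpos.trans (sub_le_sub_right (sub_le_sub_right hconj _) _)
    rwa [sub_self, zero_sub, neg_nonneg, sub_nonpos] at this
  exact (smul_le_smul_iff_of_pos_left hr).mp h

lemma norm_inner_le [StarOrderedRing A] (x y : E) : ‖(inner A x y : A)‖ ≤ ‖x‖ * ‖y‖ := by
  have hsq : ‖(inner A x y : A)‖ ^ 2 ≤ (‖x‖ * ‖y‖) ^ 2 := calc
    ‖(inner A x y : A)‖ ^ 2 = ‖inner A y x * inner A x y‖ := by
      rw [← star_inner x y, CStarRing.norm_star_mul_self, pow_two]
    _ ≤ ‖‖x‖ ^ 2 • (inner A y y : A)‖ := by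
      refine CStarAlgebra.norm_le_norm_of_nonneg_of_le ?_ (inner_mul_inner_swap_le x y)
      rw [← star_inner x y]
      exact star_mul_self_nonneg _
    _ = (‖x‖ * ‖y‖) ^ 2 := by
      rw [norm_smul, ← sq_norm_eq_norm_inner_self, mul_pow, Real.norm_of_nonneg (by positivity)]
  exact (pow_le_pow_iff_left₀ (norm_nonneg _) (by positivity) two_ne_zero).mp hsq

end RightCStarModule

section Mhat

variable {A : Type*} [CStarAlgebra A] [PartialOrder A] [StarOrderedRing A]
variable {E : Type*} [NormedAddCommGroup E] [NormedSpace ℂ E] [SMul Aᵐᵒᵖ E] [RightCStarModule A E]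

lemma mhat_isDualFunctional (m : E) : IsDualFunctional (mhat m) :=
  ⟨fun _ _ => RightCStarModule.inner_add_left, fun _ _ => RightCStarModule.inner_smul_left_complex,
    fun _ _ => RightCStarModule.inner_op_smul_left, ‖m‖, fun x => by
      rw [mul_comm]; exact RightCStarModule.norm_inner_le x m⟩

end Mhat

namespace IsDualInner

variable {A : Type*} [CStarAlgebra A] [PartialOrder A]
variable {E : Type*} [NormedAddCommGroup E] [NormedSpace ℂ E] [SMul Aᵐᵒᵖ E] [RightCStarModule A E]

lemma inn_mhat_right {inn : (E → A) → (E → A) → A} (h : IsDualInner inn) {f : E → A}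
    (hf : IsDualFunctional f) (m : E) : inn f (mhat m) = star (f m) := by
  rw [h.eval f hf m, h.star_inn]

end IsDualInner

namespace IsModuleInclusion

variable {A : Type*} [CStarAlgebra A] [PartialOrder A]
variable {E : Type*} [NormedAddCommGroup E] [NormedSpace ℂ E] [SMul Aᵐᵒᵖ E] [RightCStarModule A E]
variable {F : Type*} [NormedAddCommGroup F] [NormedSpace ℂ F] [SMul Aᵐᵒᵖ F] [RightCStarModule A F]
variable {α : E → F}

lemma norm_map (hα : IsModuleInclusion α) (x : E) : ‖α x‖ = ‖x‖ := by
  rw [RightCStarModule.norm_eq_sqrt_norm_inner_self (α x),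
    RightCStarModule.norm_eq_sqrt_norm_inner_self x, hα.map_inner]

lemma restrictFun_map (hα : IsModuleInclusion α) (m : E) : restrictFun α (α m) = mhat m :=
  funext fun x => hα.map_inner x m

lemma restrictFun_isDualFunctional [StarOrderedRing A] (hα : IsModuleInclusion α) (n : F) :
    IsDualFunctional (restrictFun α n) := by
  refine ⟨fun x y => ?_, fun c x => ?_, fun x a => ?_, ‖n‖, fun x => ?_⟩
  · simp only [restrictFun, hα.map_add, RightCStarModule.inner_add_left]
  · simp only [restrictFun, hα.map_smulC, RightCStarModule.inner_smul_left_complex]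
  · simp only [restrictFun, hα.map_smulA, RightCStarModule.inner_op_smul_left]
  · rw [mul_comm, ← hα.norm_map x]
    exact RightCStarModule.norm_inner_le (α x) n

end IsModuleInclusion

section Adjoint

variable {A : Type*} [CStarAlgebra A] [PartialOrder A] [StarOrderedRing A]
variable {E : Type*} [NormedAddCommGroup E] [NormedSpace ℂ E] [SMul Aᵐᵒᵖ E]
variable {F : Type*} [NormedAddCommGroup F] [NormedSpace ℂ F] [SMul Aᵐᵒᵖ F] [RightCStarModule A F]

/-- `I : M' → N'` is the adjoint `P*` of the restriction map `P g = g ∘ α : N' → M'`. -/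
structure IsRestrictionAdjoint (α : E → F) (innE : (E → A) → (E → A) → A)
    (innF : (F → A) → (F → A) → A) (I : (E → A) → (F → A)) : Prop where
  maps_dual : ∀ f : E → A, IsDualFunctional f → IsDualFunctional (I f)
  inn_comp : ∀ (f : E → A) (g : F → A), IsDualFunctional f → IsDualFunctional g →
    innE f (g ∘ α) = innF (I f) g

namespace IsRestrictionAdjoint

variable {α : E → F} {innE : (E → A) → (E → A) → A} {innF : (F → A) → (F → A) → A}
  {I : (E → A) → (F → A)}

lemma star_apply (hI : IsRestrictionAdjoint α innE innF I) (hinnF : IsDualInner innF)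
    {f : E → A} (hf : IsDualFunctional f) (n : F) :
    star (I f n) = innE f (restrictFun α n) := by
  rw [← hinnF.inn_mhat_right (hI.maps_dual f hf) n]
  exact (hI.inn_comp f (mhat n) hf (mhat_isDualFunctional n)).symm

lemma apply_mhat [RightCStarModule A E] (hI : IsRestrictionAdjoint α innE innF I)
    (hα : IsModuleInclusion α) (hinnE : IsDualInner innE) (hinnF : IsDualInner innF) (m : E) :
    I (mhat m) = mhat (α m) := by
  funext n
  apply star_injective
  rw [hI.star_apply hinnF (mhat_isDualFunctional m),
    ← hinnE.eval _ (hα.restrictFun_isDualFunctional n) m]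
  exact (RightCStarModule.star_inner n (α m)).symm

lemma comp_eq [RightCStarModule A E] (hI : IsRestrictionAdjoint α innE innF I)
    (hα : IsModuleInclusion α) (hinnE : IsDualInner innE) (hinnF : IsDualInner innF) {f : E → A}
    (hf : IsDualFunctional f) : I f ∘ α = f := by
  funext m
  apply star_injective
  rw [Function.comp_apply, hI.star_apply hinnF hf, hα.restrictFun_map, hinnE.inn_mhat_right hf]

lemma inn_self [RightCStarModule A E] (hI : IsRestrictionAdjoint α innE innF I)
    (hα : IsModuleInclusion α) (hinnE : IsDualInner innE) (hinnF : IsDualInner innF) {f : E → A}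
    (hf : IsDualFunctional f) : innF (I f) (I f) = innE f f := by
  rw [← hI.inn_comp f (I f) hf (hI.maps_dual f hf), hI.comp_eq hα hinnE hinnF hf]

end IsRestrictionAdjoint

end Adjoint

variable {A : Type*} [CStarAlgebra A] [PartialOrder A] [StarOrderedRing A]
variable {E : Type*} [NormedAddCommGroup E] [NormedSpace ℂ E] [SMul Aᵐᵒᵖ E] [RightCStarModule A E]
variable {F : Type*} [NormedAddCommGroup F] [NormedSpace ℂ F] [SMul Aᵐᵒᵖ F] [RightCStarModule A F]

/-- Let `M ⊆ N` (inclusion `α`), both with Hilbert duals, let `P : N' → M'` be the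
restriction map `P g = g ∘ α` and `I = P* : M' → N'` its adjoint.  Then
`I(m̂) = (α m)^` for all `m ∈ M`, and if `M` is thick in `N` then `P ∘ I = id_{M'}`
and `I` is an isometric inclusion. -/
theorem adjoint_of_restriction (α : E → F) (hα : IsModuleInclusion α)
    (innE : (E → A) → (E → A) → A) (hinnE : IsDualInner innE)
    (innF : (F → A) → (F → A) → A) (hinnF : IsDualInner innF)
    (I : (E → A) → (F → A))
    (hImaps : ∀ f : E → A, IsDualFunctional f → IsDualFunctional (I f))
    (hadj : ∀ (f : E → A) (g : F → A), IsDualFunctional f → IsDualFunctional g →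
      innE f (g ∘ α) = innF (I f) g) :
    (∀ m : E, I (mhat m) = mhat (α m)) ∧
    (IsThick α →
      (∀ f : E → A, IsDualFunctional f → (I f) ∘ α = f) ∧
      (∀ f : E → A, IsDualFunctional f → ‖innF (I f) (I f)‖ = ‖innE f f‖)) := by
  have hI : IsRestrictionAdjoint α innE innF I := ⟨hImaps, hadj⟩
  refine ⟨hI.apply_mhat hα hinnE hinnF, fun _ => ⟨fun f hf => hI.comp_eq hα hinnE hinnF hf,
    fun f hf => by rw [hI.inn_self hα hinnE hinnF hf]⟩⟩
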